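/- Let X ⊆ ℝ⁴ be a convex polytope with nonempty interior. Then for every y ∈ frontier X, the Reeb cone at y has dimension at least 1: there exists w ≠ 0 with w ∈ T_y⁺X and −i·w ∈ N_y⁺X (equivalently, w ∈ T_y⁺X ∩ i·N_y⁺X). (Lemma 3.4 of the paper.) -/

import Mathlib

/-!
At a boundary point `y` let `n_j`, `j ∈ J`, be the normals of the active facets. The matrix
`B j k = ⟪i n_k, n_j⟫` is skew-symmetric, so the zero-sum game it defines is symmetric and has
value `0`: by the minimax theorem some probability vector `t` satisfies `B t ≤ 0`. Then
`ν = ∑ t_k n_k` is an outer normal at `y`, nonzero because an interior point lies strictly inside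
every active facet, and `w = i ν` satisfies `⟪w, n_j⟫ = (B t)_j ≤ 0` for every active `j`, so it
points into `X`; finally `-i w = ν`.
-/

open RealInnerProductSpace

/-- The standard complex structure on ℝ⁴ = {(x₁,x₂,y₁,y₂)}:
`i(x₁,x₂,y₁,y₂) = (−y₁,−y₂,x₁,x₂)`. -/
def Imap (v : EuclideanSpace ℝ (Fin 4)) : EuclideanSpace ℝ (Fin 4) :=
  WithLp.toLp 2 ![-(v 2), -(v 3), v 0, v 1]

/-- The tangent cone `T_y⁺X`. -/
def tangentConePlus {m : ℕ} (X : Set (EuclideanSpace ℝ (Fin m)))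
    (y : EuclideanSpace ℝ (Fin m)) : Set (EuclideanSpace ℝ (Fin m)) :=
  closure {v | ∃ ε : ℝ, 0 < ε ∧ y + ε • v ∈ X}

/-- The positive normal cone `N_y⁺X`. -/
def normalConePlus {m : ℕ} (X : Set (EuclideanSpace ℝ (Fin m)))
    (y : EuclideanSpace ℝ (Fin m)) : Set (EuclideanSpace ℝ (Fin m)) :=
  {v | ∀ x ∈ X, ⟪x - y, v⟫ ≤ 0}

open Filter Topology Matrix

theorem Matrix.dotProduct_mulVec_self_eq_zero {ι : Type*} [Fintype ι] {B : Matrix ι ι ℝ}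
    (hB : Bᵀ = -B) (s : ι → ℝ) : s ⬝ᵥ B *ᵥ s = 0 := by
  have h : s ⬝ᵥ B *ᵥ s = (Bᵀ *ᵥ s) ⬝ᵥ s := by rw [mulVec_transpose, dotProduct_mulVec]
  rw [hB, neg_mulVec, neg_dotProduct, dotProduct_comm (B *ᵥ s)] at h
  linarith

theorem Matrix.exists_mem_stdSimplex_mulVec_nonpos {ι : Type*} [Fintype ι] [Nonempty ι]
    {B : Matrix ι ι ℝ} (hB : Bᵀ = -B) : ∃ t ∈ stdSimplex ℝ ι, ∀ j, (B *ᵥ t) j ≤ 0 := by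
  classical
  let Φ : (ι → ℝ) →ₗ[ℝ] (ι → ℝ) →ₗ[ℝ] ℝ := Matrix.toLinearMap₂' ℝ B
  have hΔ : (stdSimplex ℝ ι).Nonempty := ⟨_, single_mem_stdSimplex ℝ (Classical.arbitrary ι)⟩
  obtain ⟨t, ht, s, hs, hsaddle⟩ := Sion.exists_isSaddlePointOn (f := fun x y => Φ y x)
    hΔ (convex_stdSimplex ℝ ι) (isCompact_stdSimplex ℝ ι)
    (fun y _ => (Φ y).continuous_of_finiteDimensional.continuousOn.lowerSemicontinuousOn)
    (fun y _ => ((Φ y).convexOn (convex_stdSimplex ℝ ι)).quasiconvexOn)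
    (convex_stdSimplex ℝ ι) hΔ (isCompact_stdSimplex ℝ ι)
    (fun x _ => (Φ.flip x).continuous_of_finiteDimensional.continuousOn.upperSemicontinuousOn)
    (fun x _ => ((Φ.flip x).concaveOn (convex_stdSimplex ℝ ι)).quasiconcaveOn)
  refine ⟨t, ht, fun j => ?_⟩
  -- saddle point: `e_jᵀ B t ≤ sᵀ B s`, and the right side vanishes by skew-symmetry
  have := hsaddle s hs (Pi.single j 1) (single_mem_stdSimplex ℝ j)
  simpa [Φ, toLinearMap₂'_apply', single_dotProduct, dotProduct_mulVec_self_eq_zero hB] using this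

theorem sum_mul_neg_of_mem_stdSimplex {κ : Type*} [Fintype κ] {t : κ → ℝ} (ht : t ∈ stdSimplex ℝ κ)
    {f : κ → ℝ} (hf : ∀ k, f k < 0) : ∑ k, t k * f k < 0 := by
  obtain ⟨k, -, htk⟩ : ∃ k ∈ Finset.univ, (0 : ℝ) < t k :=
    Finset.exists_lt_of_sum_lt (by simp [ht.2])
  calc ∑ k, t k * f k < ∑ _k : κ, (0 : ℝ) :=
        Finset.sum_lt_sum (fun k _ => mul_nonpos_of_nonneg_of_nonpos (ht.1 k) (hf k).le)
          ⟨k, Finset.mem_univ k, mul_neg_of_pos_of_neg htk (hf k)⟩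
    _ = 0 := Finset.sum_const_zero

theorem exists_mem_stdSimplex_inner_skew_sum_smul_nonpos {E : Type*} [NormedAddCommGroup E]
    [InnerProductSpace ℝ E] {A : E → E} (hA : ∀ a b, ⟪A a, b⟫ = -⟪a, A b⟫)
    {ι : Type*} [Fintype ι] [Nonempty ι] (v : ι → E) :
    ∃ t ∈ stdSimplex ℝ ι, ∀ j, ⟪A (∑ k, t k • v k), v j⟫ ≤ 0 := by
  let B : Matrix ι ι ℝ := Matrix.of fun j k => ⟪A (v k), v j⟫
  have hB : Bᵀ = -B := by
    ext j k
    simp [B, hA, real_inner_comm]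
  obtain ⟨t, ht, hBt⟩ := B.exists_mem_stdSimplex_mulVec_nonpos hB
  refine ⟨t, ht, fun j => ?_⟩
  convert hBt j using 1
  simp [B, hA, sum_inner, inner_smul_left, mulVec, dotProduct, real_inner_comm, mul_comm]

section Halfspace

variable {E : Type*} [NormedAddCommGroup E] [InnerProductSpace ℝ E]

theorem inner_lt_of_mem_interior_setOf_inner_le {n x : E} {c : ℝ} (hn : n ≠ 0)
    (hx : x ∈ interior {z | ⟪z, n⟫ ≤ c}) : ⟪x, n⟫ < c := by
  have hpath : Tendsto (fun ε : ℝ => x + ε • n) (𝓝[>] 0) (𝓝 x) := by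
    have : Continuous fun ε : ℝ => x + ε • n := by fun_prop
    simpa using this.tendsto 0 |>.mono_left nhdsWithin_le_nhds
  obtain ⟨ε, hmem, hε⟩ :=
    ((hpath.eventually (mem_interior_iff_mem_nhds.mp hx)).and self_mem_nhdsWithin).exists
  have hn' : 0 < ‖n‖ := norm_pos_iff.mpr hn
  have : ⟪x, n⟫ + ε * ‖n‖ ^ 2 ≤ c := by
    simpa [inner_add_left, real_inner_smul_left] using hmem
  nlinarith [mul_pos (hε : (0 : ℝ) < ε) (pow_pos hn' 2)]

theorem isClosed_iInter_setOf_inner_le {ι : Type*} (n : ι → E) (c : ι → ℝ) :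
    IsClosed (⋂ i, {x | ⟪x, n i⟫ ≤ c i}) :=
  isClosed_iInter fun _ => isClosed_le (by fun_prop) continuous_const

theorem exists_inner_eq_of_mem_frontier {ι : Type*} [Finite ι] {n : ι → E} {c : ι → ℝ} {y : E}
    (hy : y ∈ frontier (⋂ i, {x | ⟪x, n i⟫ ≤ c i})) : ∃ i, ⟪y, n i⟫ = c i := by
  by_contra! hne
  have hyX : y ∈ ⋂ i, {x | ⟪x, n i⟫ ≤ c i} :=
    (isClosed_iInter_setOf_inner_le n c).frontier_subset hy
  have hopen : IsOpen (⋂ i, {x : E | ⟪x, n i⟫ < c i}) :=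
    isOpen_iInter_of_finite fun i => isOpen_lt (by fun_prop) continuous_const
  have hsub : (⋂ i, {x : E | ⟪x, n i⟫ < c i}) ⊆ ⋂ i, {x | ⟪x, n i⟫ ≤ c i} :=
    Set.iInter_mono fun _ _ hx => Set.mem_ofPred.mpr (le_of_lt hx)
  refine hy.2 (interior_maximal hsub hopen ?_)
  simp only [Set.mem_iInter, Set.mem_ofPred_eq] at hyX ⊢
  exact fun i => (hyX i).lt_of_ne (hne i)

theorem eventually_inner_add_smul_le {n y w : E} {c : ℝ} (hy : ⟪y, n⟫ ≤ c)
    (hw : ⟪y, n⟫ = c → ⟪w, n⟫ ≤ 0) : ∀ᶠ ε in 𝓝[>] (0 : ℝ), ⟪y + ε • w, n⟫ ≤ c := by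
  rcases hy.eq_or_lt with hyc | hyc
  · filter_upwards [self_mem_nhdsWithin] with ε (hε : 0 < ε)
    rw [inner_add_left, real_inner_smul_left, hyc]
    nlinarith [hw hyc]
  · have : Continuous fun ε : ℝ => ⟪y + ε • w, n⟫ := by fun_prop
    have hlim := (this.tendsto 0).mono_left (nhdsWithin_le_nhds (s := Set.Ioi 0))
    simp only [zero_smul, add_zero] at hlim
    filter_upwards [hlim.eventually (eventually_lt_nhds hyc)] with ε hε using hε.le

theorem sum_smul_ne_zero_of_mem_interior {ι κ : Type*} [Fintype κ] {n : ι → E} {c : ι → ℝ}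
    {x y : E} (hx : x ∈ interior (⋂ i, {z | ⟪z, n i⟫ ≤ c i})) {t : κ → ℝ}
    (ht : t ∈ stdSimplex ℝ κ) {a : κ → ι} (hn : ∀ k, n (a k) ≠ 0)
    (ha : ∀ k, ⟪y, n (a k)⟫ = c (a k)) : ∑ k, t k • n (a k) ≠ 0 := by
  have hneg : ⟪x - y, ∑ k, t k • n (a k)⟫ < 0 := by
    simp_rw [inner_sum, real_inner_smul_right]
    refine sum_mul_neg_of_mem_stdSimplex ht fun k => ?_
    rw [inner_sub_left, ha k, sub_neg]
    exact inner_lt_of_mem_interior_setOf_inner_le (hn k)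
      (interior_mono (Set.iInter_subset _ (a k)) hx)
  intro h
  simp [h] at hneg

end Halfspace

section Polyhedron

variable {m : ℕ} {ι : Type*} {n : ι → EuclideanSpace ℝ (Fin m)} {c : ι → ℝ}
  {y : EuclideanSpace ℝ (Fin m)}

theorem mem_tangentConePlus_of_inner_nonpos [Finite ι]
    (hy : y ∈ ⋂ i, {x | ⟪x, n i⟫ ≤ c i}) {w : EuclideanSpace ℝ (Fin m)}
    (hw : ∀ i, ⟪y, n i⟫ = c i → ⟪w, n i⟫ ≤ 0) :
    w ∈ tangentConePlus (⋂ i, {x | ⟪x, n i⟫ ≤ c i}) y := by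
  simp only [Set.mem_iInter, Set.mem_ofPred_eq] at hy
  have hev : ∀ᶠ ε in 𝓝[>] (0 : ℝ), ∀ i, ⟪y + ε • w, n i⟫ ≤ c i :=
    eventually_all.mpr fun i => eventually_inner_add_smul_le (hy i) (hw i)
  obtain ⟨ε, hε, hεpos⟩ := (hev.and self_mem_nhdsWithin).exists
  exact subset_closure ⟨ε, hεpos, Set.mem_iInter.mpr hε⟩

theorem mem_normalConePlus_of_inner_eq {i : ι} (hi : ⟪y, n i⟫ = c i) :
    n i ∈ normalConePlus (⋂ j, {x | ⟪x, n j⟫ ≤ c j}) y := fun x hx => by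
  have := Set.mem_iInter.mp hx i
  rw [inner_sub_left, hi]
  exact sub_nonpos.mpr this

end Polyhedron

theorem sum_smul_mem_normalConePlus {m : ℕ} {X : Set (EuclideanSpace ℝ (Fin m))}
    {y : EuclideanSpace ℝ (Fin m)} {κ : Type*} [Fintype κ] {t : κ → ℝ} (ht : ∀ k, 0 ≤ t k)
    {v : κ → EuclideanSpace ℝ (Fin m)} (hv : ∀ k, v k ∈ normalConePlus X y) :
    ∑ k, t k • v k ∈ normalConePlus X y := fun x hx => by
  rw [inner_sum]
  exact Finset.sum_nonpos fun k _ => by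
    rw [real_inner_smul_right]
    exact mul_nonpos_of_nonneg_of_nonpos (ht k) (hv k x hx)

theorem inner_Imap_left (a b : EuclideanSpace ℝ (Fin 4)) : ⟪Imap a, b⟫ = -⟪a, Imap b⟫ := by
  simp [Imap, PiLp.inner_apply, Fin.sum_univ_four]
  ring

theorem Imap_Imap (v : EuclideanSpace ℝ (Fin 4)) : Imap (Imap v) = -v := by
  ext i
  fin_cases i <;> simp [Imap]

theorem Imap_ne_zero {v : EuclideanSpace ℝ (Fin 4)} (hv : v ≠ 0) : Imap v ≠ 0 := by
  intro h
  have h0 : Imap 0 = 0 := by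
    ext i
    fin_cases i <;> simp [Imap]
  exact hv (by simpa [h, h0] using Imap_Imap v)

theorem reebCone_nontrivial_general {N : ℕ}
    (n : Fin N → EuclideanSpace ℝ (Fin 4)) (c : Fin N → ℝ)
    (hn : ∀ i, n i ≠ 0)
    (X : Set (EuclideanSpace ℝ (Fin 4)))
    (hX : X = ⋂ i, {x | ⟪x, n i⟫ ≤ c i})
    (hint : (interior X).Nonempty) :
    ∀ y ∈ frontier X, ∃ w : EuclideanSpace ℝ (Fin 4),
      w ≠ 0 ∧ w ∈ tangentConePlus X y ∧ -(Imap w) ∈ normalConePlus X y := by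
  subst hX
  intro y hy
  have hyX := (isClosed_iInter_setOf_inner_le n c).frontier_subset hy
  obtain ⟨i₀, hi₀⟩ := exists_inner_eq_of_mem_frontier hy
  let J := {i // ⟪y, n i⟫ = c i}
  have : Nonempty J := ⟨⟨i₀, hi₀⟩⟩
  obtain ⟨t, ht, hinward⟩ :=
    exists_mem_stdSimplex_inner_skew_sum_smul_nonpos inner_Imap_left fun k : J => n k
  set ν := ∑ k : J, t k • n k
  obtain ⟨x₀, hx₀⟩ := hint
  have hν : ν ≠ 0 := sum_smul_ne_zero_of_mem_interior hx₀ ht (fun k => hn k) fun k => k.2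
  refine ⟨Imap ν, Imap_ne_zero hν,
    mem_tangentConePlus_of_inner_nonpos hyX fun i hi => hinward ⟨i, hi⟩, ?_⟩
  rw [Imap_Imap, neg_neg]
  exact sum_smul_mem_normalConePlus ht.1 fun k => mem_normalConePlus_of_inner_eq k.2

/-- Lemma 3.4: if `X ⊆ ℝ⁴` is a convex polytope with nonempty interior, then for every
boundary point `y` the Reeb cone `R_y⁺X = T_y⁺X ∩ i·N_y⁺X` contains a nonzero vector,
i.e. there is `w ≠ 0` with `w ∈ T_y⁺X` and `−i·w ∈ N_y⁺X`. -/
theorem reebCone_nontrivial {N : ℕ}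
    (n : Fin N → EuclideanSpace ℝ (Fin 4)) (c : Fin N → ℝ)
    (hn : ∀ i, n i ≠ 0)
    (X : Set (EuclideanSpace ℝ (Fin 4)))
    (hX : X = ⋂ i, {x | ⟪x, n i⟫ ≤ c i})
    (hcomp : IsCompact X)
    (hint : (interior X).Nonempty) :
    ∀ y ∈ frontier X, ∃ w : EuclideanSpace ℝ (Fin 4),
      w ≠ 0 ∧ w ∈ tangentConePlus X y ∧ -(Imap w) ∈ normalConePlus X y :=
  reebCone_nontrivial_general n c hn X hX hint
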